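/- Let ρ_BTN be a basic triangle network state and equip each party X ∈ {A, B, C} with the product observables {G_α^{X₁} ⊗ G_β^{X₂}} built from complete orthogonal sets of observables on C^d. Then the matrix Ξ(ρ_BTN) := Γ({G_α^{A₁} ⊗ G_β^{A₂}, G_γ^{B₁} ⊗ G_δ^{B₂}, G_ε^{C₁} ⊗ G_ζ^{C₂}}, ρ_BTN) − diag( Γ({G_α}, ρ^{(A₁)}) ⊗ Γ({G_β}, ρ^{(A₂)}), Γ({G_γ}, ρ^{(B₁)}) ⊗ Γ({G_δ}, ρ^{(B₂)}), Γ({G_ε}, ρ^{(C₁)}) ⊗ Γ({G_ζ}, ρ^{(C₂)}) ) is positive semidefinite. -/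

import Mathlib

open Matrix Kronecker BigOperators
open scoped ComplexOrder

noncomputable section

/-- Covariance matrix of a family of observables `M` in the state `ρ`. -/
def covMat {n ι : Type*} [Fintype n] (M : ι → Matrix n n ℂ) (ρ : Matrix n n ℂ) :
    Matrix ι ι ℂ :=
  Matrix.of fun i j => (M i * M j * ρ).trace - (M i * ρ).trace * (M j * ρ).trace

/-- A density matrix: positive semidefinite with unit trace. -/
def IsDensity {n : Type*} [Fintype n] (ρ : Matrix n n ℂ) : Prop :=
  ρ.PosSemidef ∧ ρ.trace = 1

/-- Partial trace over the first tensor factor. -/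
def ptrace₁ {m n : Type*} [Fintype m] (M : Matrix (m × n) (m × n) ℂ) : Matrix n n ℂ :=
  Matrix.of fun i j => ∑ k, M (k, i) (k, j)

/-- Partial trace over the second tensor factor. -/
def ptrace₂ {m n : Type*} [Fintype n] (M : Matrix (m × n) (m × n) ℂ) : Matrix m m ℂ :=
  Matrix.of fun i j => ∑ k, M (i, k) (j, k)

/-- Index of a two-qudit space. -/
abbrev D2 (d : ℕ) := Fin d × Fin d

/-- Index of the six-factor triangle-network space, ordered C₂, A₁, A₂, B₁, B₂, C₁. -/
abbrev TriIdx (d : ℕ) := D2 d × (D2 d × D2 d)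

/-- The basic triangle network state `ρ_b ⊗ ρ_c ⊗ ρ_a`. -/
def btnState {d : ℕ} (ρa ρb ρc : Matrix (D2 d) (D2 d) ℂ) :
    Matrix (TriIdx d) (TriIdx d) ℂ :=
  ρb ⊗ₖ (ρc ⊗ₖ ρa)

/-- Embed an observable of Alice (acting on A₁A₂) into the global space. -/
def embedA {d : ℕ} (M : Matrix (D2 d) (D2 d) ℂ) : Matrix (TriIdx d) (TriIdx d) ℂ :=
  Matrix.of fun p q =>
    if p.1.1 = q.1.1 ∧ p.2.1.2 = q.2.1.2 ∧ p.2.2 = q.2.2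
    then M (p.1.2, p.2.1.1) (q.1.2, q.2.1.1) else 0

/-- Embed an observable of Bob (acting on B₁B₂) into the global space. -/
def embedB {d : ℕ} (M : Matrix (D2 d) (D2 d) ℂ) : Matrix (TriIdx d) (TriIdx d) ℂ :=
  Matrix.of fun p q =>
    if p.1 = q.1 ∧ p.2.1.1 = q.2.1.1 ∧ p.2.2.2 = q.2.2.2
    then M (p.2.1.2, p.2.2.1) (q.2.1.2, q.2.2.1) else 0

/-- Embed an observable of Charlie (acting on C₁C₂) into the global space. -/
def embedC {d : ℕ} (M : Matrix (D2 d) (D2 d) ℂ) : Matrix (TriIdx d) (TriIdx d) ℂ :=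
  Matrix.of fun p q =>
    if p.1.2 = q.1.2 ∧ p.2.1 = q.2.1 ∧ p.2.2.1 = q.2.2.1
    then M (p.2.2.2, p.1.1) (q.2.2.2, q.1.1) else 0

section marginals
variable {d : ℕ} (ρa ρb ρc : Matrix (D2 d) (D2 d) ℂ)

/-- Marginal of ρ_BTN on A₁ (second factor of ρ_b = ρ^{C₂A₁}). -/
def margA1 : Matrix (Fin d) (Fin d) ℂ := ptrace₁ ρb
/-- Marginal on C₂. -/
def margC2 : Matrix (Fin d) (Fin d) ℂ := ptrace₂ ρb
/-- Marginal on A₂ (first factor of ρ_c = ρ^{A₂B₁}). -/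
def margA2 : Matrix (Fin d) (Fin d) ℂ := ptrace₂ ρc
/-- Marginal on B₁. -/
def margB1 : Matrix (Fin d) (Fin d) ℂ := ptrace₁ ρc
/-- Marginal on B₂ (first factor of ρ_a = ρ^{B₂C₁}). -/
def margB2 : Matrix (Fin d) (Fin d) ℂ := ptrace₂ ρa
/-- Marginal on C₁. -/
def margC1 : Matrix (Fin d) (Fin d) ℂ := ptrace₁ ρa

/-- Reduced observable A^(2) = tr_{A₁}(A (ρ^{A₁} ⊗ 1)). -/
def redA2 (M : Matrix (D2 d) (D2 d) ℂ) : Matrix (Fin d) (Fin d) ℂ :=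
  ptrace₁ (M * (margA1 ρb ⊗ₖ (1 : Matrix (Fin d) (Fin d) ℂ)))
/-- Reduced observable A^(1) = tr_{A₂}(A (1 ⊗ ρ^{A₂})). -/
def redA1 (M : Matrix (D2 d) (D2 d) ℂ) : Matrix (Fin d) (Fin d) ℂ :=
  ptrace₂ (M * ((1 : Matrix (Fin d) (Fin d) ℂ) ⊗ₖ margA2 ρc))
/-- Reduced observable B^(1) = tr_{B₂}(B (1 ⊗ ρ^{B₂})). -/
def redB1 (M : Matrix (D2 d) (D2 d) ℂ) : Matrix (Fin d) (Fin d) ℂ :=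
  ptrace₂ (M * ((1 : Matrix (Fin d) (Fin d) ℂ) ⊗ₖ margB2 ρa))
/-- Reduced observable B^(2) = tr_{B₁}(B (ρ^{B₁} ⊗ 1)). -/
def redB2 (M : Matrix (D2 d) (D2 d) ℂ) : Matrix (Fin d) (Fin d) ℂ :=
  ptrace₁ (M * (margB1 ρc ⊗ₖ (1 : Matrix (Fin d) (Fin d) ℂ)))
/-- Reduced observable C^(1) = tr_{C₂}(C (1 ⊗ ρ^{C₂})); here C acts on C₁C₂. -/
def redC1 (M : Matrix (D2 d) (D2 d) ℂ) : Matrix (Fin d) (Fin d) ℂ :=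
  ptrace₂ (M * ((1 : Matrix (Fin d) (Fin d) ℂ) ⊗ₖ margC2 ρb))
/-- Reduced observable C^(2) = tr_{C₁}(C (ρ^{C₁} ⊗ 1)). -/
def redC2 (M : Matrix (D2 d) (D2 d) ℂ) : Matrix (Fin d) (Fin d) ℂ :=
  ptrace₁ (M * (margC1 ρa ⊗ₖ (1 : Matrix (Fin d) (Fin d) ℂ)))

end marginals

/-! ### Auxiliary lemmas -/

section AuxLemmas

lemma trace_one_kron {m n : Type*} [Fintype m] [Fintype n] [DecidableEq m]
    (M : Matrix n n ℂ) (σ : Matrix (m × n) (m × n) ℂ) :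
    (((1 : Matrix m m ℂ) ⊗ₖ M) * σ).trace = (M * ptrace₁ σ).trace := by
  simp only [Matrix.trace, Matrix.diag, Matrix.mul_apply, ptrace₁, Matrix.of_apply,
    kroneckerMap_apply, Matrix.one_apply, Fintype.sum_prod_type, ite_mul, one_mul, zero_mul,
    Finset.sum_ite_irrel, Finset.sum_const_zero, Finset.sum_ite_eq, Finset.mem_univ, if_true,
    Finset.mul_sum]
  rw [Finset.sum_comm]
  refine Finset.sum_congr rfl fun x1 _ => ?_
  rw [Finset.sum_comm]

lemma trace_kron_one {m n : Type*} [Fintype m] [Fintype n] [DecidableEq n]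
    (M : Matrix m m ℂ) (σ : Matrix (m × n) (m × n) ℂ) :
    ((M ⊗ₖ (1 : Matrix n n ℂ)) * σ).trace = (M * ptrace₂ σ).trace := by
  simp only [Matrix.trace, Matrix.diag, Matrix.mul_apply, ptrace₂, Matrix.of_apply,
    kroneckerMap_apply, Matrix.one_apply, Fintype.sum_prod_type, mul_ite, mul_one, mul_zero,
    ite_mul, zero_mul, Finset.sum_ite_irrel, Finset.sum_const_zero, Finset.sum_ite_eq,
    Finset.mem_univ, if_true, Finset.mul_sum]
  refine Finset.sum_congr rfl fun x _ => ?_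
  rw [Finset.sum_comm]

lemma embedA_kron {d : ℕ} (M1 M2 : Matrix (Fin d) (Fin d) ℂ) :
    embedA (M1 ⊗ₖ M2) =
      ((1 : Matrix (Fin d) (Fin d) ℂ) ⊗ₖ M1) ⊗ₖ
        ((M2 ⊗ₖ (1 : Matrix (Fin d) (Fin d) ℂ)) ⊗ₖ (1 : Matrix (D2 d) (D2 d) ℂ)) := by
  ext ⟨⟨x, a⟩, ⟨⟨b, y⟩, z⟩⟩ ⟨⟨x', a'⟩, ⟨⟨b', y'⟩, z'⟩⟩
  simp only [embedA, Matrix.of_apply, kroneckerMap_apply, Matrix.one_apply]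
  split_ifs <;> simp_all <;> ring

lemma embedB_kron {d : ℕ} (N1 N2 : Matrix (Fin d) (Fin d) ℂ) :
    embedB (N1 ⊗ₖ N2) =
      (1 : Matrix (D2 d) (D2 d) ℂ) ⊗ₖ
        (((1 : Matrix (Fin d) (Fin d) ℂ) ⊗ₖ N1) ⊗ₖ (N2 ⊗ₖ (1 : Matrix (Fin d) (Fin d) ℂ))) := by
  ext ⟨⟨x, a⟩, ⟨⟨b, y⟩, ⟨u, v⟩⟩⟩ ⟨⟨x', a'⟩, ⟨⟨b', y'⟩, ⟨u', v'⟩⟩⟩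
  simp only [embedB, Matrix.of_apply, kroneckerMap_apply, Matrix.one_apply]
  split_ifs <;> simp_all <;> ring

lemma embedC_kron {d : ℕ} (P1 P2 : Matrix (Fin d) (Fin d) ℂ) :
    embedC (P1 ⊗ₖ P2) =
      (P2 ⊗ₖ (1 : Matrix (Fin d) (Fin d) ℂ)) ⊗ₖ
        ((1 : Matrix (D2 d) (D2 d) ℂ) ⊗ₖ ((1 : Matrix (Fin d) (Fin d) ℂ) ⊗ₖ P1)) := by
  ext ⟨⟨x, a⟩, ⟨⟨b, y⟩, ⟨u, v⟩⟩⟩ ⟨⟨x', a'⟩, ⟨⟨b', y'⟩, ⟨u', v'⟩⟩⟩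
  simp only [embedC, Matrix.of_apply, kroneckerMap_apply, Matrix.one_apply]
  split_ifs <;> simp_all <;> ring

lemma covMat_posSemidef {n ι : Type*} [Fintype n] [Fintype ι] [DecidableEq n]
    {ρ : Matrix n n ℂ} (hρ : ρ.PosSemidef) (hτ : ρ.trace = 1)
    (M : ι → Matrix n n ℂ) (hM : ∀ i, (M i).IsHermitian) :
    (covMat M ρ).PosSemidef := by
  classical
  set s := (open scoped MatrixOrder in CFC.sqrt ρ) with hs
  have hsH : s.IsHermitian := by
    open scoped MatrixOrder in exact (CFC.sqrt_nonneg ρ).posSemidef.isHermitian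
  have hss : s * s = ρ := by
    open scoped MatrixOrder in exact CFC.sqrt_mul_sqrt_self ρ hρ.nonneg
  set A : Matrix (n × n) ι ℂ :=
    Matrix.of (fun p i => ((M i - (M i * ρ).trace • 1) * s) p.1 p.2) with hA
  have key : covMat M ρ = Aᴴ * A := by
    ext i j
    have h1 : (Aᴴ * A) i j
        = (((M i - (M i * ρ).trace • 1) * s)ᴴ * ((M j - (M j * ρ).trace • 1) * s)).trace := by
      simp only [Matrix.trace, Matrix.diag, Matrix.mul_apply, Matrix.conjTranspose_apply, hA,
        Matrix.of_apply, Fintype.sum_prod_type]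
      rw [Finset.sum_comm]
    rw [h1, Matrix.conjTranspose_mul, hsH.eq, Matrix.mul_assoc,
      Matrix.trace_mul_comm, Matrix.mul_assoc, Matrix.mul_assoc, hss]
    simp only [Matrix.conjTranspose_sub, Matrix.conjTranspose_smul, Matrix.conjTranspose_one,
      (hM i).eq, Matrix.sub_mul, Matrix.mul_sub, Matrix.smul_mul, Matrix.mul_smul,
      Matrix.one_mul, Matrix.mul_one, Matrix.trace_sub, Matrix.trace_smul, smul_eq_mul, hτ,
      covMat, Matrix.of_apply, Matrix.mul_assoc, smul_smul]
    ring
  rw [key]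
  exact Matrix.posSemidef_conjTranspose_mul_self A

end AuxLemmas

section MoreAux

lemma ptrace₁_isHermitian {m n : Type*} [Fintype m] {M : Matrix (m × n) (m × n) ℂ}
    (h : M.IsHermitian) : (ptrace₁ M).IsHermitian := by
  ext i j
  simp only [ptrace₁, Matrix.conjTranspose_apply, Matrix.of_apply, star_sum]
  exact Finset.sum_congr rfl fun k _ => h.apply (k, i) (k, j)

lemma ptrace₂_isHermitian {m n : Type*} [Fintype n] {M : Matrix (m × n) (m × n) ℂ}
    (h : M.IsHermitian) : (ptrace₂ M).IsHermitian := by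
  ext i j
  simp only [ptrace₂, Matrix.conjTranspose_apply, Matrix.of_apply, star_sum]
  exact Finset.sum_congr rfl fun k _ => h.apply (i, k) (j, k)

lemma isHermitian_kron {m n : Type*} {A : Matrix m m ℂ} {B : Matrix n n ℂ}
    (hA : A.IsHermitian) (hB : B.IsHermitian) : (A ⊗ₖ B).IsHermitian := by
  ext ⟨i, j⟩ ⟨k, l⟩
  simp only [Matrix.conjTranspose_apply, kroneckerMap_apply, star_mul']
  rw [hA.apply, hB.apply]

lemma isHermitian_smul_real {n : Type*} {c : ℂ} (hc : star c = c) {A : Matrix n n ℂ}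
    (hA : A.IsHermitian) : (c • A).IsHermitian := by
  unfold Matrix.IsHermitian
  rw [Matrix.conjTranspose_smul, hc, hA.eq]

lemma star_trace_mul {n : Type*} [Fintype n] {A B : Matrix n n ℂ}
    (hA : A.IsHermitian) (hB : B.IsHermitian) : star (A * B).trace = (A * B).trace := by
  rw [← Matrix.trace_conjTranspose, Matrix.conjTranspose_mul, hA.eq, hB.eq,
    Matrix.trace_mul_comm]

end MoreAux

set_option maxHeartbeats 2000000 in
/-- Positivity condition: for a BTN state with complete
orthogonal sets of product observables, the matrix
`Ξ = Γ(ρ_BTN) − diag(Γ(ρ^{(A₁)}) ⊗ Γ(ρ^{(A₂)}), Γ(ρ^{(B₁)}) ⊗ Γ(ρ^{(B₂)}),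
Γ(ρ^{(C₁)}) ⊗ Γ(ρ^{(C₂)}))` is positive semidefinite. -/
theorem stmt6 {d : ℕ} (hd : 1 ≤ d)
    (ρa ρb ρc : Matrix (D2 d) (D2 d) ℂ)
    (hρa : IsDensity ρa) (hρb : IsDensity ρb) (hρc : IsDensity ρc)
    (GA1 GA2 GB1 GB2 GC1 GC2 : Fin (d ^ 2) → Matrix (Fin d) (Fin d) ℂ)
    (hGA1herm : ∀ α, (GA1 α).IsHermitian) (hGA2herm : ∀ β, (GA2 β).IsHermitian)
    (hGB1herm : ∀ γ, (GB1 γ).IsHermitian) (hGB2herm : ∀ δ, (GB2 δ).IsHermitian)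
    (hGC1herm : ∀ ε, (GC1 ε).IsHermitian) (hGC2herm : ∀ ζ, (GC2 ζ).IsHermitian)
    (hGA1 : ∀ α α', (GA1 α * GA1 α').trace = if α = α' then (d : ℂ) else 0)
    (hGA2 : ∀ β β', (GA2 β * GA2 β').trace = if β = β' then (d : ℂ) else 0)
    (hGB1 : ∀ γ γ', (GB1 γ * GB1 γ').trace = if γ = γ' then (d : ℂ) else 0)
    (hGB2 : ∀ δ δ', (GB2 δ * GB2 δ').trace = if δ = δ' then (d : ℂ) else 0)
    (hGC1 : ∀ ε ε', (GC1 ε * GC1 ε').trace = if ε = ε' then (d : ℂ) else 0)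
    (hGC2 : ∀ ζ ζ', (GC2 ζ * GC2 ζ').trace = if ζ = ζ' then (d : ℂ) else 0)
    (Γ Ξ : Matrix
      ((Fin (d ^ 2) × Fin (d ^ 2)) ⊕ ((Fin (d ^ 2) × Fin (d ^ 2)) ⊕ (Fin (d ^ 2) × Fin (d ^ 2))))
      ((Fin (d ^ 2) × Fin (d ^ 2)) ⊕ ((Fin (d ^ 2) × Fin (d ^ 2)) ⊕ (Fin (d ^ 2) × Fin (d ^ 2))))
      ℂ)
    (hΓ : Γ = covMat
      (Sum.elim (fun p => embedA (GA1 p.1 ⊗ₖ GA2 p.2))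
        (Sum.elim (fun p => embedB (GB1 p.1 ⊗ₖ GB2 p.2))
          (fun p => embedC (GC1 p.1 ⊗ₖ GC2 p.2))))
      (btnState ρa ρb ρc))
    (hΞ : Ξ = Γ - Matrix.of fun p q => match p, q with
      | Sum.inl p', Sum.inl q' =>
          (covMat GA1 (margA1 ρb) ⊗ₖ covMat GA2 (margA2 ρc)) p' q'
      | Sum.inr (Sum.inl p'), Sum.inr (Sum.inl q') =>
          (covMat GB1 (margB1 ρc) ⊗ₖ covMat GB2 (margB2 ρa)) p' q'
      | Sum.inr (Sum.inr p'), Sum.inr (Sum.inr q') =>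
          (covMat GC1 (margC1 ρa) ⊗ₖ covMat GC2 (margC2 ρb)) p' q'
      | _, _ => 0) :
    Ξ.PosSemidef := by
  obtain ⟨hρaP, hρaT⟩ := hρa
  obtain ⟨hρbP, hρbT⟩ := hρb
  obtain ⟨hρcP, hρcT⟩ := hρc
  set Fb : ((Fin (d ^ 2) × Fin (d ^ 2)) ⊕ ((Fin (d ^ 2) × Fin (d ^ 2)) ⊕ (Fin (d ^ 2) × Fin (d ^ 2))))
      → Matrix (D2 d) (D2 d) ℂ := Sum.elim
    (fun p => (GA2 p.2 * margA2 ρc).trace • ((1 : Matrix (Fin d) (Fin d) ℂ) ⊗ₖ GA1 p.1))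
    (Sum.elim (fun _ => (0 : Matrix (D2 d) (D2 d) ℂ))
      (fun p => (GC1 p.1 * margC1 ρa).trace • (GC2 p.2 ⊗ₖ (1 : Matrix (Fin d) (Fin d) ℂ)))) with hFb
  set Fc : ((Fin (d ^ 2) × Fin (d ^ 2)) ⊕ ((Fin (d ^ 2) × Fin (d ^ 2)) ⊕ (Fin (d ^ 2) × Fin (d ^ 2))))
      → Matrix (D2 d) (D2 d) ℂ := Sum.elim
    (fun p => (GA1 p.1 * margA1 ρb).trace • (GA2 p.2 ⊗ₖ (1 : Matrix (Fin d) (Fin d) ℂ)))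
    (Sum.elim (fun p => (GB2 p.2 * margB2 ρa).trace • ((1 : Matrix (Fin d) (Fin d) ℂ) ⊗ₖ GB1 p.1))
      (fun _ => (0 : Matrix (D2 d) (D2 d) ℂ))) with hFc
  set Fa : ((Fin (d ^ 2) × Fin (d ^ 2)) ⊕ ((Fin (d ^ 2) × Fin (d ^ 2)) ⊕ (Fin (d ^ 2) × Fin (d ^ 2))))
      → Matrix (D2 d) (D2 d) ℂ := Sum.elim (fun _ => (0 : Matrix (D2 d) (D2 d) ℂ))
    (Sum.elim (fun p => (GB1 p.1 * margB1 ρc).trace • (GB2 p.2 ⊗ₖ (1 : Matrix (Fin d) (Fin d) ℂ)))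
      (fun p => (GC2 p.2 * margC2 ρb).trace • ((1 : Matrix (Fin d) (Fin d) ℂ) ⊗ₖ GC1 p.1))) with hFa
  have hXi : Ξ = covMat Fb ρb + covMat Fc ρc + covMat Fa ρa := by
    subst hΞ hΓ
    ext i j
    rcases i with p | p | p <;> rcases j with q | q | q <;>
    · simp only [hFb, hFc, hFa, Matrix.sub_apply, Matrix.add_apply, covMat, Matrix.of_apply,
        Sum.elim_inl, Sum.elim_inr, btnState, embedA_kron, embedB_kron, embedC_kron,
        kroneckerMap_apply, Matrix.zero_apply]
      simp only [← Matrix.mul_kronecker_mul, Matrix.one_mul, Matrix.mul_one,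
        Matrix.trace_kronecker, trace_one_kron, trace_kron_one, hρaT, hρbT, hρcT,
        margA1, margA2, margB1, margB2, margC1, margC2,
        Matrix.smul_mul, Matrix.mul_smul, Matrix.trace_smul, smul_eq_mul,
        Matrix.zero_mul, Matrix.mul_zero, Matrix.trace_zero, mul_one, one_mul]
      ring
  rw [hXi]
  have hbH : (ptrace₁ ρb).IsHermitian := ptrace₁_isHermitian hρbP.isHermitian
  have hcH2 : (ptrace₂ ρc).IsHermitian := ptrace₂_isHermitian hρcP.isHermitian
  have hcH1 : (ptrace₁ ρc).IsHermitian := ptrace₁_isHermitian hρcP.isHermitian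
  have haH2 : (ptrace₂ ρa).IsHermitian := ptrace₂_isHermitian hρaP.isHermitian
  have haH1 : (ptrace₁ ρa).IsHermitian := ptrace₁_isHermitian hρaP.isHermitian
  have hbH2 : (ptrace₂ ρb).IsHermitian := ptrace₂_isHermitian hρbP.isHermitian
  have hermFb : ∀ i, (Fb i).IsHermitian := by
    rintro (p | p | p)
    · exact isHermitian_smul_real (star_trace_mul (hGA2herm p.2) hcH2)
        (isHermitian_kron Matrix.isHermitian_one (hGA1herm p.1))
    · exact Matrix.isHermitian_zero
    · exact isHermitian_smul_real (star_trace_mul (hGC1herm p.1) haH1)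
        (isHermitian_kron (hGC2herm p.2) Matrix.isHermitian_one)
  have hermFc : ∀ i, (Fc i).IsHermitian := by
    rintro (p | p | p)
    · exact isHermitian_smul_real (star_trace_mul (hGA1herm p.1) hbH)
        (isHermitian_kron (hGA2herm p.2) Matrix.isHermitian_one)
    · exact isHermitian_smul_real (star_trace_mul (hGB2herm p.2) haH2)
        (isHermitian_kron Matrix.isHermitian_one (hGB1herm p.1))
    · exact Matrix.isHermitian_zero
  have hermFa : ∀ i, (Fa i).IsHermitian := by
    rintro (p | p | p)
    · exact Matrix.isHermitian_zero
    · exact isHermitian_smul_real (star_trace_mul (hGB1herm p.1) hcH1)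
        (isHermitian_kron (hGB2herm p.2) Matrix.isHermitian_one)
    · exact isHermitian_smul_real (star_trace_mul (hGC2herm p.2) hbH2)
        (isHermitian_kron Matrix.isHermitian_one (hGC1herm p.1))
  exact ((covMat_posSemidef hρbP hρbT Fb hermFb).add
    (covMat_posSemidef hρcP hρcT Fc hermFc)).add (covMat_posSemidef hρaP hρaT Fa hermFa)
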